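/- Let n ≥ 2 be a natural number and let c₁, c₂ be real constants. Define u(η,t) = e^(−t)·(c₁·log(tanh(η/2)) + c₂)^(1/n) (real power). Then for every η > 0 and every t ∈ ℝ with c₁·log(tanh(η/2)) + c₂ > 0, u satisfies the classical nonlinear diffusion equation ∂u/∂t (η,t) = (1/sinh η)·∂/∂η[ sinh η · ∂/∂η ( u(η,t)ⁿ ) ] − u(η,t). -/

import Mathlib

/-!
Since `u(r, t)ⁿ = e^{-nt} (c₁ log tanh (r/2) + c₂)` near `η`, and `d/dr log tanh (r/2) = 1 / sinh r`,
the flux `sinh r · ∂ᵣ(uⁿ)` is the constant `e^{-nt} c₁`. Hence `Δ_H(uⁿ) = 0`, and the equation reduces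
to `∂ₜu = -u`, which holds because `u` depends on `t` only through the factor `e^{-t}`.
-/

open Real Filter Topology

lemma Real.hasDerivAt_tanh (x : ℝ) : HasDerivAt tanh (1 / cosh x ^ 2) x := by
  rw [show tanh = sinh / cosh from funext tanh_eq_sinh_div_cosh]
  refine ((hasDerivAt_sinh x).div (hasDerivAt_cosh x) (cosh_pos x).ne').congr_deriv ?_
  rw [← cosh_sq_sub_sinh_sq x]
  ring

lemma Real.sinh_eq_two_mul_sinh_half_mul_cosh_half (x : ℝ) :
    sinh x = 2 * sinh (x / 2) * cosh (x / 2) := by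
  rw [← sinh_two_mul]; ring_nf

lemma hasDerivAt_log_tanh_half {s : ℝ} (hs : s ≠ 0) :
    HasDerivAt (fun r => log (tanh (r / 2))) (1 / sinh s) s := by
  have hsh : sinh (s / 2) ≠ 0 := sinh_ne_zero.2 (by simpa using hs)
  have hch : cosh (s / 2) ≠ 0 := (cosh_pos _).ne'
  have htanh : tanh (s / 2) ≠ 0 := by rw [tanh_eq_sinh_div_cosh]; exact div_ne_zero hsh hch
  have h := (hasDerivAt_tanh (s / 2)).comp s ((hasDerivAt_id' s).div_const 2)
  refine (h.log htanh).congr_deriv ?_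
  rw [Function.comp_apply, tanh_eq_sinh_div_cosh, sinh_eq_two_mul_sinh_half_mul_cosh_half s]
  field_simp

lemma deriv_sinh_mul_deriv_eq_zero_of_eventuallyEq {g : ℝ → ℝ} {η a b : ℝ} (hη : η ≠ 0)
    (hg : g =ᶠ[𝓝 η] fun r => a * log (tanh (r / 2)) + b) :
    deriv (fun s => sinh s * deriv g s) η = 0 := by
  have hflux : (fun s => sinh s * deriv g s) =ᶠ[𝓝 η] fun _ => a := by
    filter_upwards [hg.eventuallyEq_nhds, eventually_ne_nhds hη] with s hgs hs
    rw [hgs.deriv_eq, (((hasDerivAt_log_tanh_half hs).const_mul a).add_const b).deriv]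
    field_simp [sinh_ne_zero.2 hs]
  rw [hflux.deriv_eq, deriv_const]

/-- `u(η,t) = e^{-t}·(c₁ log(tanh(η/2)) + c₂)^(1/n)` solves the classical
nonlinear diffusion equation `∂ₜu = Δ_H(uⁿ) - u` for `η > 0` where the
radicand is positive. -/
theorem stmt_2 (n : ℕ) (hn : 2 ≤ n) (c₁ c₂ : ℝ)
    (u : ℝ → ℝ → ℝ)
    (hu : ∀ η t : ℝ, u η t =
      Real.exp (-t) * (c₁ * Real.log (Real.tanh (η / 2)) + c₂) ^ ((1 : ℝ) / n)) :
    ∀ η t : ℝ, 0 < η → 0 < c₁ * Real.log (Real.tanh (η / 2)) + c₂ →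
      deriv (fun s : ℝ => u η s) t =
        (1 / Real.sinh η) *
          deriv (fun s : ℝ => Real.sinh s * deriv (fun r : ℝ => (u r t) ^ n) s) η
        - u η t := by
  intro η t hη hpos
  set f : ℝ → ℝ := fun r => c₁ * log (tanh (r / 2)) + c₂
  have hf : ContinuousAt f η :=
    (((hasDerivAt_log_tanh_half hη.ne').const_mul c₁).add_const c₂).continuousAt
  have hpow : (fun r => u r t ^ n) =ᶠ[𝓝 η]
      fun r => (exp (-t) ^ n * c₁) * log (tanh (r / 2)) + exp (-t) ^ n * c₂ := by
    filter_upwards [hf.eventually (lt_mem_nhds hpos)] with r hr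
    rw [hu, mul_pow, one_div, rpow_inv_natCast_pow hr.le (by omega)]
    ring
  have htime : HasDerivAt (fun s => u η s) (-u η t) t := by
    simp only [hu]
    exact ((hasDerivAt_neg' t).exp.mul_const _).congr_deriv (by ring)
  rw [htime.deriv, deriv_sinh_mul_deriv_eq_zero_of_eventuallyEq hη.ne' hpow]
  ring
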